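/- Let B be a finite Blaschke product with B(z) = λ (z^n - c^n)/(1 - \bar{c}^n z^n), |λ| = 1, c ∈ D, n ≥ 2. Then the polynomial p(z) = λ(|c|^{2n} - 1) z^n - λ c^n, restricted to E = φ(D) where φ(z) = e^{iπ/n} z (1 - \bar{c}^n z^n)^{-1/n}, is a conformal model for B on D: φ is an injective holomorphic map from D onto E and B = p ∘ φ on D. -/

import Mathlib

/-!
Since `exp (π i / n) ^ n = -1` and `ρ z ^ n = 1 - c̄ⁿ zⁿ`, we get `φ z ^ n = -zⁿ / (1 - c̄ⁿ zⁿ)`;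
substituting this into `p` and using `|c|^{2n} = cⁿ c̄ⁿ` gives `B`.

For injectivity, `φ z = φ w` forces `zⁿ = wⁿ`, because `s ↦ s / (1 - a s)` is injective. So
`w = ω z` with `ωⁿ = 1`, and `ρ (ω z) = ρ z`: the quotient `t ↦ ρ (ω t) / ρ t` is continuous on
the connected disk with values in the finite set of `n`-th roots of unity, so it is constant,
and it equals `1` at `0`.
-/

open Complex

def unitDisk : Set ℂ := {z : ℂ | ‖z‖ < 1}

theorem unitDisk_eq_ball : unitDisk = Metric.ball (0 : ℂ) 1 := by
  ext z; simp [unitDisk]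

theorem isPreconnected_unitDisk : IsPreconnected unitDisk :=
  unitDisk_eq_ball ▸ (convex_ball 0 1).isPreconnected

theorem mul_mem_unitDisk {ω z : ℂ} (hω : ‖ω‖ ≤ 1) (hz : z ∈ unitDisk) : ω * z ∈ unitDisk :=
  show ‖ω * z‖ < 1 by
    rw [norm_mul]; exact lt_of_le_of_lt (mul_le_of_le_one_left (norm_nonneg z) hω) hz

theorem one_sub_mul_pow_ne_zero {a z : ℂ} {n : ℕ} (ha : ‖a‖ ≤ 1) (hz : z ∈ unitDisk)
    (hn : n ≠ 0) : 1 - a * z ^ n ≠ 0 := by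
  have hzn : ‖z ^ n‖ < 1 := by rw [norm_pow]; exact pow_lt_one₀ (norm_nonneg z) hz hn
  have : ‖a * z ^ n‖ < 1 := mul_mem_unitDisk ha hzn
  exact sub_ne_zero.2 fun h => by simp [← h] at this

theorem IsPreconnected.eq_of_pow_eq_one {α K : Type*} [TopologicalSpace α] [CommRing K]
    [IsDomain K] [TopologicalSpace K] [T1Space K] {S : Set α} (hS : IsPreconnected S)
    {u : α → K} (hu : ContinuousOn u S) {n : ℕ} (hn : n ≠ 0) (h1 : ∀ x ∈ S, u x ^ n = 1)
    {x y : α} (hx : x ∈ S) (hy : y ∈ S) : u x = u y :=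
  hS.constant_of_mapsTo (T := Polynomial.nthRootsFinset n (1 : K))
    (Finset.finite_toSet _).isDiscrete hu
    (fun z hz => (Polynomial.mem_nthRootsFinset (Nat.pos_of_ne_zero hn) 1).2 (h1 z hz)) hx hy

theorem exp_pi_mul_I_div_pow {n : ℕ} (hn : n ≠ 0) :
    exp (Real.pi * I / n) ^ n = -1 := by
  rw [← exp_nat_mul, mul_div_cancel₀ _ (Nat.cast_ne_zero.2 hn), exp_pi_mul_I]

theorem eq_of_div_one_sub_mul_eq {K : Type*} [Field K] {a s t : K} (hs : 1 - a * s ≠ 0)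
    (ht : 1 - a * t ≠ 0) (h : s / (1 - a * s) = t / (1 - a * t)) : s = t := by
  rw [div_eq_div_iff hs ht] at h
  linear_combination h

section RootBranch

variable {n : ℕ} {ρ g : ℂ → ℂ}

theorem apply_mul_eq_of_pow_eq_one (hn : n ≠ 0) (hρ : ContinuousOn ρ unitDisk)
    (hρ0 : ∀ z ∈ unitDisk, ρ z ≠ 0) (hρpow : ∀ z ∈ unitDisk, ρ z ^ n = g (z ^ n))
    {ω : ℂ} (hω : ω ^ n = 1) {z : ℂ} (hz : z ∈ unitDisk) : ρ (ω * z) = ρ z := by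
  have hωD : ∀ t ∈ unitDisk, ω * t ∈ unitDisk :=
    fun t => mul_mem_unitDisk (norm_eq_one_of_pow_eq_one hω hn).le
  have hcont : ContinuousOn (fun t => ρ (ω * t) / ρ t) unitDisk :=
    (hρ.comp (continuousOn_const.mul continuousOn_id) hωD).div hρ hρ0
  have hroot : ∀ t ∈ unitDisk, (ρ (ω * t) / ρ t) ^ n = 1 := fun t ht => by
    rw [div_pow, hρpow _ (hωD t ht), mul_pow, hω, one_mul, ← hρpow t ht,
      div_self (pow_ne_zero n (hρ0 t ht))]
  have h0 : (0 : ℂ) ∈ unitDisk := by simp [unitDisk]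
  have := isPreconnected_unitDisk.eq_of_pow_eq_one hcont hn hroot hz h0
  rwa [mul_zero, div_self (hρ0 0 h0), div_eq_one_iff_eq (hρ0 z hz)] at this

theorem eq_of_div_eq_of_pow_eq (hn : n ≠ 0) (hρ : ContinuousOn ρ unitDisk)
    (hρ0 : ∀ z ∈ unitDisk, ρ z ≠ 0) (hρpow : ∀ z ∈ unitDisk, ρ z ^ n = g (z ^ n))
    {z w : ℂ} (hz : z ∈ unitDisk) (hdiv : z / ρ z = w / ρ w)
    (hpow : z ^ n = w ^ n) : z = w := by
  rcases eq_or_ne z 0 with rfl | hz0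
  · exact (pow_eq_zero_iff hn).1 (hpow ▸ zero_pow hn) |>.symm
  have hω : (w / z) ^ n = 1 := by rw [div_pow, ← hpow, div_self (pow_ne_zero n hz0)]
  have hρw : ρ w = ρ z := by
    rw [← apply_mul_eq_of_pow_eq_one hn hρ hρ0 hρpow hω hz, div_mul_cancel₀ w hz0]
  rwa [hρw, div_left_inj' (hρ0 z hz)] at hdiv

end RootBranch

theorem stmt14_general (n : ℕ) (hn : 2 ≤ n) (lam c : ℂ)
    (hc : c ∈ unitDisk)
    (ρ : ℂ → ℂ) (hρdiff : DifferentiableOn ℂ ρ unitDisk)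
    (hρpow : ∀ z ∈ unitDisk, ρ z ^ n = 1 - (starRingEnd ℂ) c ^ n * z ^ n)
    (B φ p : ℂ → ℂ)
    (hB : ∀ z : ℂ, B z = lam * (z ^ n - c ^ n) / (1 - (starRingEnd ℂ) c ^ n * z ^ n))
    (hφ : ∀ z : ℂ, φ z = Complex.exp (↑Real.pi * Complex.I / n) * z / ρ z)
    (hp : ∀ z : ℂ, p z = lam * ((‖c‖ : ℂ) ^ (2 * n) - 1) * z ^ n - lam * c ^ n) :
    DifferentiableOn ℂ φ unitDisk ∧ Set.InjOn φ unitDisk ∧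
      Set.BijOn φ unitDisk (φ '' unitDisk) ∧
      ∀ z ∈ unitDisk, B z = p (φ z) := by
  have hn0 : n ≠ 0 := by omega
  set a := (starRingEnd ℂ) c ^ n
  have ha : ‖a‖ ≤ 1 := by
    rw [norm_pow, norm_conj]; exact pow_le_one₀ (norm_nonneg c) (le_of_lt hc)
  have hden : ∀ z ∈ unitDisk, 1 - a * z ^ n ≠ 0 := fun z hz => one_sub_mul_pow_ne_zero ha hz hn0
  have hρ0 : ∀ z ∈ unitDisk, ρ z ≠ 0 := fun z hz hρz =>
    hden z hz (by rw [← hρpow z hz, hρz, zero_pow hn0])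
  have hφpow : ∀ z ∈ unitDisk, φ z ^ n = -(z ^ n / (1 - a * z ^ n)) := fun z hz => by
    rw [hφ, mul_div_assoc, mul_pow, div_pow, hρpow z hz, exp_pi_mul_I_div_pow hn0, neg_one_mul]
  have hdiff : DifferentiableOn ℂ φ unitDisk :=
    funext hφ ▸ ((differentiable_const _).mul differentiable_id).differentiableOn.div hρdiff hρ0
  have hinj : Set.InjOn φ unitDisk := by
    intro z hz w hw hzw
    have hdiv : z / ρ z = w / ρ w := by
      simpa only [hφ, mul_div_assoc, mul_right_inj' (exp_ne_zero _)] using hzw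
    refine eq_of_div_eq_of_pow_eq hn0 hρdiff.continuousOn hρ0 (g := fun s => 1 - a * s) hρpow
      hz hdiv (eq_of_div_one_sub_mul_eq (hden z hz) (hden w hw) ?_)
    rw [← neg_inj, ← hφpow z hz, ← hφpow w hw, hzw]
  refine ⟨hdiff, hinj, hinj.bijOn_image, fun z hz => ?_⟩
  have hnorm : (‖c‖ : ℂ) ^ (2 * n) = c ^ n * a := by rw [pow_mul, ← mul_conj', mul_pow]
  rw [hB, hp, hφpow z hz, hnorm]
  linear_combination -(lam * c ^ n) * mul_inv_cancel₀ (hden z hz)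

/-- Let `B(z) = λ(z^n - c^n)/(1 - conj c ^ n z^n)` with `|λ| = 1`,
`c` in the disk, `n ≥ 2`. Then the polynomial `p(z) = λ(|c|^{2n}-1)z^n - λ c^n`,
restricted to `E = φ(D)` where `φ(z) = e^{iπ/n} z / ρ(z)` (with `ρ` a holomorphic
branch on the disk of the n-th root of `1 - conj c ^ n z^n`, equal to `1` at `0`),
is a conformal model for `B` on the disk: `φ` is an injective holomorphic map of the
disk onto `E` and `B = p ∘ φ` on the disk. -/
theorem stmt14 (n : ℕ) (hn : 2 ≤ n) (lam c : ℂ) (hlam : ‖lam‖ = 1)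
    (hc : c ∈ unitDisk)
    (ρ : ℂ → ℂ) (hρdiff : DifferentiableOn ℂ ρ unitDisk)
    (hρpow : ∀ z ∈ unitDisk, ρ z ^ n = 1 - (starRingEnd ℂ) c ^ n * z ^ n)
    (hρ0 : ρ 0 = 1)
    (B φ p : ℂ → ℂ)
    (hB : ∀ z : ℂ, B z = lam * (z ^ n - c ^ n) / (1 - (starRingEnd ℂ) c ^ n * z ^ n))
    (hφ : ∀ z : ℂ, φ z = Complex.exp (↑Real.pi * Complex.I / n) * z / ρ z)
    (hp : ∀ z : ℂ, p z = lam * ((‖c‖ : ℂ) ^ (2 * n) - 1) * z ^ n - lam * c ^ n) :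
    DifferentiableOn ℂ φ unitDisk ∧ Set.InjOn φ unitDisk ∧
      Set.BijOn φ unitDisk (φ '' unitDisk) ∧
      ∀ z ∈ unitDisk, B z = p (φ z) :=
  stmt14_general n hn lam c hc ρ hρdiff hρpow B φ p hB hφ hp
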